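/- For every partition I of a cycle graph C_n into tubes with I not the full vertex set, the contracted graph C_n/I is a cycle C_{|I|}, every block induces a path, and a partition of C_n of this type with k blocks has exactly k edges between distinct blocks; moreover, under the rotation action of Z/n on tube partitions of C_n, each orbit Orb(J) of a partition J with |J| blocks satisfies n·|Orb(J) ∩ Π_gr(P_n)| = |J|·|Orb(J)|, where Π_gr(P_n) is identified with the tube partitions of C_n avoiding the edge (n,1). -/

import Mathlib

open scoped Classical

def IsGraphPartition {V : Type*} (Γ : SimpleGraph V) (r : Setoid V) : Prop :=
  ∀ v : V, (Γ.induce {w | r w v}).Connected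

def contractSetoid {V : Type*} (Γ : SimpleGraph V) (r : Setoid V) :
    SimpleGraph (Quotient r) :=
  SimpleGraph.fromRel fun a b =>
    ∃ v w : V, Quotient.mk r v = a ∧ Quotient.mk r w = b ∧ Γ.Adj v w

/-- The rotation of a setoid (partition) of `Fin n` by `a`:
`v` is related to `w` iff `v - a` is related to `w - a`. -/
def rotS {n : ℕ} (a : Fin n) (r : Setoid (Fin n)) : Setoid (Fin n) :=
  ⟨fun v w => r (v - a) (w - a),
    ⟨fun _ => r.iseqv.refl _, fun h => r.iseqv.symm h, fun h h' => r.iseqv.trans h h'⟩⟩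

/-!
Read the cycle from a vertex `b` such that the edge `(b - 1, b)` is cut, i.e. joins two different
blocks, and label each vertex by the number of cut edges met before it. If `k` is the number of cut
edges, the labels are `0, …, k - 1`, and two vertices lie in the same block exactly when they have
the same label: the label changes only across a cut and blocks are connected, while consecutive
vertices with no cut between them are related. Crossing a cut raises the label by one modulo `k`.
So the blocks are arcs, there are `k` of them, and contracting them gives the `k`-cycle.

For the orbit identity, the rotations `a` for which `rotS a r` cuts the edge `(n - 1, 0)` correspond
to the cut edges of `r`, and every partition in the orbit is reached by the same number `c` of
rotations, so `n = c · |Orb|` and `k = c · |Orb ∩ Π_gr(P_n)|`.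
-/

open Finset SimpleGraph Fin.NatCast Fin.CommRing

theorem IsGraphPartition.eq_of_rel {V β : Type*} {G : SimpleGraph V} {r : Setoid V}
    (hr : IsGraphPartition G r) (f : V → β) (hf : ∀ x y, r x y → G.Adj x y → f x = f y)
    {v w : V} (hvw : r v w) : f v = f w := by
  suffices ∀ z : {x // r x w},
      Relation.ReflTransGen (G.induce {x | r x w}).Adj ⟨v, hvw⟩ z → f v = f z from
    this ⟨w, r.refl w⟩ ((reachable_iff_reflTransGen _ _).mp ((hr w).preconnected _ _))
  intro z hz
  induction hz with
  | refl => rfl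
  | @tail x y _ hadj ih => exact ih.trans (hf _ _ (r.trans x.2 (r.symm y.2)) hadj)

theorem contractSetoid_adj_mk {V : Type*} {G : SimpleGraph V} {r : Setoid V} {v w : V} :
    (contractSetoid G r).Adj (Quotient.mk r v) (Quotient.mk r w) ↔
      ¬ r v w ∧ ∃ v' w', r v' v ∧ r w' w ∧ G.Adj v' w' := by
  simp only [contractSetoid, fromRel_adj, ne_eq, Quotient.eq]
  refine and_congr_right fun _ =>
    ⟨?_, fun ⟨v', w', hv, hw, h⟩ => .inl ⟨v', w', hv, hw, h⟩⟩
  rintro (⟨v', w', hv, hw, h⟩ | ⟨w', v', hw, hv, h⟩)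
  exacts [⟨v', w', hv, hw, h⟩, ⟨v', w', hv, hw, h.symm⟩]

theorem Setoid.exists_rel_not_rel_sub_one {n : ℕ} [NeZero n] {r : Setoid (Fin n)} (hr : r ≠ ⊤)
    (v : Fin n) : ∃ b, r b v ∧ ¬ r (b - 1) b := by
  by_contra! h
  have hdown (j : ℕ) : r (v - j) v := by
    induction j with
    | zero => simp
    | succ j ih => exact r.trans (by simpa [sub_sub] using h _ ih) ih
  have hv (x : Fin n) : r x v := by simpa using hdown (v - x).val
  exact hr (Setoid.eq_top_iff.mpr fun x y => r.trans (hv x) (r.symm (hv y)))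

theorem Setoid.exists_sym2_eq_and_rel_iff {α : Type*} {r : Setoid α} {x y : α} :
    (∃ a b, s(x, y) = s(a, b) ∧ r a b) ↔ r x y := by
  refine ⟨fun ⟨a, b, h, hab⟩ => ?_, fun h => ⟨x, y, rfl, h⟩⟩
  rcases Sym2.eq_iff.mp h with ⟨rfl, rfl⟩ | ⟨rfl, rfl⟩
  exacts [hab, r.symm hab]

theorem Fin.val_sub_eq_one_iff {n : ℕ} {x y : Fin n} (hy : y.val + 1 < n) :
    (x - y).val = 1 ↔ x.val = y.val + 1 := by
  rcases le_or_gt y x with h | h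
  · rw [Fin.coe_sub_iff_le.mpr h]; omega
  · rw [Fin.coe_sub_iff_lt.mpr h]; omega

theorem Fin.add_natCast_pred {n : ℕ} [NeZero n] (b : Fin n) :
    b + ((n - 1 : ℕ) : Fin n) = b - 1 := by
  rw [Nat.cast_pred (Nat.pos_of_neZero n), Fin.natCast_self, zero_sub, ← sub_eq_add_neg]

namespace SimpleGraph

theorem eq_add_one_or_eq_add_one_of_cycleGraph_adj {n : ℕ} [NeZero n] {x y : Fin n}
    (h : (cycleGraph n).Adj x y) : y = x + 1 ∨ x = y + 1 := by
  obtain _ | _ | m := n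
  · exact x.elim0
  · exact absurd h cycleGraph_one_adj
  · rw [cycleGraph_adj, sub_eq_iff_eq_add', sub_eq_iff_eq_add'] at h
    exact h.symm

theorem cycleGraph_adj_add_one {n : ℕ} [NeZero n] (hn : 1 < n) (x : Fin n) :
    (cycleGraph n).Adj x (x + 1) := by
  obtain ⟨m, rfl⟩ := Nat.exists_eq_add_of_le' hn
  exact cycleGraph_adj.mpr (.inr (add_sub_cancel_left x 1))

def cycleGraphInduceArcIso {n : ℕ} [NeZero n] (a : Fin n) {m : ℕ} (hm : m < n) :
    (cycleGraph n).induce {w | (w - a).val < m} ≃g pathGraph m where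
  toFun w := ⟨(w.1 - a).val, w.2⟩
  invFun i := ⟨a + Fin.castLE hm.le i, by simp⟩
  left_inv w := by ext; simp
  right_inv i := by ext; simp
  map_rel_iff' {w w'} := by
    have hw := w.2; have hw' := w'.2
    simp only [Set.mem_ofPred_eq] at hw hw'
    simp only [Equiv.coe_fn_mk, pathGraph_adj, comap_adj, Function.Embedding.coe_subtype,
      cycleGraph_adj']
    rw [← sub_sub_sub_cancel_right w.1 w'.1 a, ← sub_sub_sub_cancel_right w'.1 w.1 a,
      Fin.val_sub_eq_one_iff (by omega), Fin.val_sub_eq_one_iff (by omega)]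
    omega

end SimpleGraph

theorem Nat.card_subtype_comp_eq_mul {α β : Type*} [Finite α] (f : α → β) {c : ℕ}
    (hc : ∀ a, Nat.card {a' // f a' = f a} = c) (P : β → Prop) :
    Nat.card {a // P (f a)} = c * Nat.card {s // (∃ a, f a = s) ∧ P s} := by
  have : Finite {s // (∃ a, f a = s) ∧ P s} :=
    Finite.of_surjective (fun a : {a // P (f a)} => ⟨f a, ⟨a, rfl⟩, a.2⟩)
      fun ⟨_, ⟨a, rfl⟩, ha⟩ => ⟨⟨a, ha⟩, rfl⟩
  have : Fintype {s // (∃ a, f a = s) ∧ P s} := Fintype.ofFinite _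
  let e : {a // P (f a)} ≃ Σ s : {s // (∃ a, f a = s) ∧ P s}, {a // f a = s} :=
    { toFun a := ⟨⟨f a, ⟨a, rfl⟩, a.2⟩, ⟨a, rfl⟩⟩
      invFun x := ⟨x.2, by rw [x.2.2]; exact x.1.2.2⟩
      left_inv _ := rfl
      right_inv := fun ⟨⟨_, _, _⟩, ⟨_, rfl⟩⟩ => rfl }
  rw [Nat.card_congr e, Nat.card_sigma, Finset.sum_congr rfl fun s _ => ?_, Finset.sum_const,
    smul_eq_mul, Finset.card_univ, ← Nat.card_eq_fintype_card, mul_comm]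
  obtain ⟨_, ⟨a, rfl⟩, _⟩ := s
  exact hc a

section Rotation

theorem rotS_apply {n : ℕ} {a v w : Fin n} {r : Setoid (Fin n)} :
    rotS a r v w ↔ r (v - a) (w - a) :=
  Iff.rfl

variable {n : ℕ} [NeZero n]

theorem rotS_rotS (a b : Fin n) (r : Setoid (Fin n)) : rotS a (rotS b r) = rotS (a + b) r :=
  Setoid.ext fun _ _ => by rw [rotS_apply, rotS_apply, rotS_apply, sub_sub, sub_sub]

theorem rotS_zero (r : Setoid (Fin n)) : rotS 0 r = r :=
  Setoid.ext fun _ _ => by rw [rotS_apply, sub_zero, sub_zero]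

theorem rotS_eq_rotS_iff {a b : Fin n} {r : Setoid (Fin n)} :
    rotS a r = rotS b r ↔ rotS (a - b) r = r := by
  constructor <;> intro h
  · simpa [rotS_rotS, rotS_zero, sub_eq_neg_add] using congrArg (rotS (-b)) h
  · simpa [rotS_rotS] using congrArg (rotS b) h

theorem mul_card_rotS_orbit_not_rel_eq (r : Setoid (Fin n)) :
    n * Nat.card {s : Setoid (Fin n) // (∃ a, rotS a r = s) ∧ ¬ s (-1 : Fin n) 0} =
      Nat.card {d : Fin n // ¬ r d (d + 1)} *
        Nat.card {s : Setoid (Fin n) // ∃ a, rotS a r = s} := by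
  set c := Nat.card {a : Fin n // rotS a r = r}
  have hc (a : Fin n) : Nat.card {a' // rotS a' r = rotS a r} = c :=
    Nat.card_congr (Equiv.subtypeEquiv (Equiv.subRight a) fun _ => rotS_eq_rotS_iff)
  have horbit := Nat.card_subtype_comp_eq_mul (fun a : Fin n => rotS a r) hc fun _ => True
  have hcut := Nat.card_subtype_comp_eq_mul (fun a : Fin n => rotS a r) hc fun s => ¬ s (-1) 0
  have hcut' :
      Nat.card {a : Fin n // ¬ rotS a r (-1) 0} = Nat.card {d : Fin n // ¬ r d (d + 1)} :=
    Nat.card_congr (Equiv.subtypeEquiv (Equiv.subLeft (-1)) fun a => by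
      rw [rotS_apply, Equiv.subLeft_apply, show (0 : Fin n) - a = -1 - a + 1 by ring])
  simp only [and_true, Nat.card_eq_fintype_card, Fintype.card_subtype_true, Fintype.card_fin]
    at horbit
  rw [← hcut', hcut, mul_right_comm, ← horbit]

end Rotation

namespace CycleTubePartition

variable {n : ℕ} [NeZero n] (r : Setoid (Fin n)) (b : Fin n)

noncomputable def cutEdgesEquiv (hn : 3 ≤ n) :
    {d : Fin n // ¬ r d (d + 1)} ≃
      {e : Sym2 (Fin n) // e ∈ (cycleGraph n).edgeSet ∧ ¬ ∃ a b, e = s(a, b) ∧ r a b} := by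
  refine Equiv.ofBijective (fun d => ⟨s(d.1, d.1 + 1), cycleGraph_adj_add_one (by omega) d.1,
    Setoid.exists_sym2_eq_and_rel_iff.not.mpr d.2⟩) ⟨fun d d' h => ?_, fun e => ?_⟩
  · rcases Sym2.eq_iff.mp (congrArg Subtype.val h) with ⟨h, -⟩ | ⟨h₁, h₂⟩
    · exact Subtype.ext h
    · have h2 : (2 : Fin n) = 0 := by linear_combination h₂ - h₁
      simp [Fin.ext_iff, Nat.mod_eq_of_lt (show 2 < n by omega)] at h2
  · obtain ⟨e, he, hcut⟩ := e
    induction e using Sym2.ind with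
    | _ x y =>
      rcases eq_add_one_or_eq_add_one_of_cycleGraph_adj ((mem_edgeSet (G := cycleGraph n)).mp he)
        with rfl | rfl
      · exact ⟨⟨x, Setoid.exists_sym2_eq_and_rel_iff.not.mp hcut⟩, rfl⟩
      · exact ⟨⟨y, fun h => hcut ⟨y, y + 1, Sym2.eq_swap, h⟩⟩,
          Subtype.ext Sym2.eq_swap⟩

noncomputable def cutCount (p : ℕ) : ℕ :=
  #((range p).filter fun i : ℕ => ¬ r (b + i) (b + i + 1))

theorem cutCount_zero : cutCount r b 0 = 0 := rfl

theorem cutCount_succ (p : ℕ) :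
    cutCount r b (p + 1) = cutCount r b p + if r (b + p) (b + p + 1) then 0 else 1 := by
  unfold cutCount
  rw [range_add_one, filter_insert]
  split_ifs with h
  · rfl
  · exact card_insert_of_notMem (by simp)

theorem cutCount_mono : Monotone (cutCount r b) := fun _ _ h =>
  card_le_card (filter_subset_filter _ (range_subset_range.mpr h))

theorem exists_cutCount_eq_of_lt {j p : ℕ} (h : j < cutCount r b p) :
    ∃ q < p, cutCount r b q = j ∧ ¬ r (b + q) (b + q + 1) := by
  induction p with
  | zero => exact absurd h (Nat.not_lt_zero _)
  | succ p ih =>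
    by_cases hj : j < cutCount r b p
    · obtain ⟨q, hq, hqj⟩ := ih hj
      exact ⟨q, by omega, hqj⟩
    · rw [cutCount_succ] at h
      split_ifs at h with hcut
      · omega
      · exact ⟨p, by omega, by omega, hcut⟩

theorem rel_add_of_cutCount_eq {i j : ℕ} (hij : i ≤ j) (h : cutCount r b i = cutCount r b j) :
    r (b + i) (b + j) := by
  induction j, hij using Nat.le_induction with
  | base => exact r.refl _
  | succ j hij ih =>
    have hj : cutCount r b j = cutCount r b (j + 1) :=
      le_antisymm (cutCount_mono r b j.le_succ) (h ▸ cutCount_mono r b hij)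
    have hjoin : r (b + j) (b + j + 1) := by
      by_contra hcut
      rw [cutCount_succ, if_neg hcut] at hj
      omega
    exact r.trans (ih (h.trans hj.symm)) (by simpa [add_assoc] using hjoin)

noncomputable def blockIndex (w : Fin n) : ℕ := cutCount r b (w - b).val

theorem blockIndex_natCast {p : ℕ} (hp : p < n) : blockIndex r b (b + p) = cutCount r b p := by
  simp [blockIndex, Fin.val_natCast, Nat.mod_eq_of_lt hp]

theorem blockIndex_add_one {x : Fin n} (hx : x ≠ b - 1) :
    blockIndex r b (x + 1) = blockIndex r b x + if r x (x + 1) then 0 else 1 := by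
  have hlt : (x - b).val + 1 < n := by
    refine lt_of_le_of_ne (x - b).isLt fun h => hx ?_
    rw [← Fin.add_natCast_pred, show n - 1 = (x - b).val by omega]
    simp
  rw [blockIndex, add_sub_right_comm, Fin.val_add_one_of_lt' hlt, cutCount_succ]
  simp [blockIndex]

variable {r b}

theorem cutCount_eq_pred_add_one (hb : ¬ r (b - 1) b) :
    cutCount r b n = cutCount r b (n - 1) + 1 := by
  have h := cutCount_succ r b (n - 1)
  rwa [Nat.sub_add_cancel (Nat.pos_of_neZero n), Fin.add_natCast_pred, sub_add_cancel,
    if_neg hb] at h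

theorem blockIndex_lt (hb : ¬ r (b - 1) b) (w : Fin n) : blockIndex r b w < cutCount r b n := by
  rw [cutCount_eq_pred_add_one hb, Nat.lt_succ_iff]
  exact cutCount_mono r b (Nat.le_pred_of_lt (w - b).isLt)

theorem one_lt_cutCount (hb : ¬ r (b - 1) b) : 1 < cutCount r b n := by
  rw [cutCount_eq_pred_add_one hb, Nat.lt_add_left_iff_pos, Nat.pos_iff_ne_zero]
  intro h
  have := rel_add_of_cutCount_eq r b (Nat.zero_le _) (cutCount_zero r b ▸ h.symm)
  rw [Fin.add_natCast_pred] at this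
  exact hb (r.symm (by simpa using this))

theorem rel_iff_blockIndex_eq (hr : IsGraphPartition (cycleGraph n) r) (hb : ¬ r (b - 1) b)
    {v w : Fin n} : r v w ↔ blockIndex r b v = blockIndex r b w := by
  constructor
  · refine hr.eq_of_rel _ fun x y hxy hadj => ?_
    have step {x : Fin n} (h : r x (x + 1)) : blockIndex r b x = blockIndex r b (x + 1) := by
      have hx : x ≠ b - 1 := by rintro rfl; exact hb (by simpa using h)
      rw [blockIndex_add_one r b hx, if_pos h, add_zero]
    rcases eq_add_one_or_eq_add_one_of_cycleGraph_adj hadj with rfl | rfl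
    exacts [step hxy, (step (r.symm hxy)).symm]
  · have key {v w : Fin n} (hle : (v - b).val ≤ (w - b).val)
        (h : blockIndex r b v = blockIndex r b w) : r v w := by
      simpa using rel_add_of_cutCount_eq r b hle h
    intro h
    rcases le_total (v - b).val (w - b).val with hle | hle
    exacts [key hle h, r.symm (key hle h.symm)]

noncomputable def blockFin (hb : ¬ r (b - 1) b) (w : Fin n) : Fin (cutCount r b n) :=
  ⟨blockIndex r b w, blockIndex_lt hb w⟩

theorem val_blockFin_add_one_sub (hb : ¬ r (b - 1) b) {x : Fin n} (hx : ¬ r x (x + 1)) :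
    (blockFin hb (x + 1) - blockFin hb x).val = 1 := by
  by_cases hxb : x = b - 1
  · -- the wrap-around from the last block `k - 1` back to block `0`
    subst hxb
    have hlast : blockIndex r b (b - 1) + 1 = cutCount r b n := by
      rw [← Fin.add_natCast_pred,
        blockIndex_natCast r b (Nat.sub_lt (Nat.pos_of_neZero n) one_pos),
        cutCount_eq_pred_add_one hb]
    have hfirst : blockIndex r b (b - 1 + 1) = 0 := by simp [blockIndex, cutCount_zero]
    have := one_lt_cutCount hb
    rw [Fin.coe_sub_iff_lt.mpr (by simp only [blockFin, Fin.lt_def]; omega)]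
    simp only [blockFin]
    omega
  · have h := blockIndex_add_one r b hxb
    rw [if_neg hx] at h
    rw [Fin.coe_sub_iff_le.mpr (by simp only [blockFin, Fin.le_def]; omega)]
    simp only [blockFin]
    omega

theorem exists_not_rel_blockFin_eq (hb : ¬ r (b - 1) b) (i : Fin (cutCount r b n)) :
    ∃ x, ¬ r x (x + 1) ∧ blockFin hb x = i := by
  obtain ⟨q, hq, hqi, hcut⟩ := exists_cutCount_eq_of_lt r b i.isLt
  exact ⟨b + q, hcut, Fin.ext (by simp [blockFin, blockIndex_natCast r b hq, hqi])⟩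

noncomputable def quotientEquivFin (hr : IsGraphPartition (cycleGraph n) r)
    (hb : ¬ r (b - 1) b) : Quotient r ≃ Fin (cutCount r b n) :=
  Equiv.ofBijective
    (Quotient.lift (blockFin hb) fun _ _ h => Fin.ext ((rel_iff_blockIndex_eq hr hb).mp h))
    ⟨fun p q => Quotient.inductionOn₂ p q fun _ _ h =>
        Quotient.sound ((rel_iff_blockIndex_eq hr hb).mpr (Fin.val_eq_of_eq h)),
      fun i => let ⟨x, _, hx⟩ := exists_not_rel_blockFin_eq hb i; ⟨Quotient.mk r x, hx⟩⟩

theorem blockFin_eq_iff (hr : IsGraphPartition (cycleGraph n) r) (hb : ¬ r (b - 1) b)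
    {v w : Fin n} : blockFin hb v = blockFin hb w ↔ r v w :=
  Fin.ext_iff.trans (rel_iff_blockIndex_eq hr hb).symm

theorem cycleGraph_adj_blockFin_iff (hn : 1 < n) (hr : IsGraphPartition (cycleGraph n) r)
    (hb : ¬ r (b - 1) b) {v w : Fin n} :
    (cycleGraph _).Adj (blockFin hb v) (blockFin hb w) ↔
      ¬ r v w ∧ ∃ v' w', r v' v ∧ r w' w ∧ (cycleGraph n).Adj v' w' := by
  have : NeZero (cutCount r b n) := ⟨(zero_lt_one.trans (one_lt_cutCount hb)).ne'⟩
  have of_cut {x v w : Fin n} (hx : ¬ r x (x + 1)) (hv : r x v) (hw : r (x + 1) w) :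
      (blockFin hb w - blockFin hb v).val = 1 := by
    rw [← (blockFin_eq_iff hr hb).mpr hv, ← (blockFin_eq_iff hr hb).mpr hw]
    exact val_blockFin_add_one_sub hb hx
  have to_cut {v w : Fin n} (h : (blockFin hb w - blockFin hb v).val = 1) :
      ¬ r v w ∧ ∃ v' w', r v' v ∧ r w' w ∧ (cycleGraph n).Adj v' w' := by
    obtain ⟨x, hx, hxv⟩ := exists_not_rel_blockFin_eq hb (blockFin hb v)
    have hxw : blockFin hb (x + 1) = blockFin hb w := by
      rw [← sub_left_inj (a := blockFin hb v), ← hxv, Fin.ext_iff,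
        val_blockFin_add_one_sub hb hx, hxv, h]
    refine ⟨fun hvw => ?_, x, x + 1, (blockFin_eq_iff hr hb).mp hxv,
      (blockFin_eq_iff hr hb).mp hxw, cycleGraph_adj_add_one hn x⟩
    rw [(blockFin_eq_iff hr hb).mpr hvw, sub_self] at h
    exact absurd h (by simp)
  rw [cycleGraph_adj']
  constructor
  · rintro (h | h)
    · obtain ⟨hwv, w', v', hw', hv', hadj⟩ := to_cut h
      exact ⟨fun hvw => hwv (r.symm hvw), v', w', hv', hw', hadj.symm⟩
    · exact to_cut h
  · rintro ⟨hvw, v', w', hv', hw', hadj⟩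
    rcases eq_add_one_or_eq_add_one_of_cycleGraph_adj hadj with rfl | rfl
    · exact .inr (of_cut (fun h => hvw (r.trans (r.symm hv') (r.trans h hw'))) hv' hw')
    · exact .inl (of_cut (fun h => hvw (r.trans (r.symm hv') (r.trans (r.symm h) hw'))) hw' hv')

noncomputable def contractSetoidIso (hn : 1 < n) (hr : IsGraphPartition (cycleGraph n) r)
    (hb : ¬ r (b - 1) b) : contractSetoid (cycleGraph n) r ≃g cycleGraph (cutCount r b n) where
  toEquiv := quotientEquivFin hr hb
  map_rel_iff' {p q} := by
    induction p, q using Quotient.inductionOn₂ with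
    | _ v w => exact (cycleGraph_adj_blockFin_iff hn hr hb).trans contractSetoid_adj_mk.symm

theorem exists_setOf_rel_eq_arc (hr : IsGraphPartition (cycleGraph n) r) (hb : ¬ r (b - 1) b)
    {v : Fin n} (hbv : r b v) : ∃ m < n, {w | r w v} = {w | (w - b).val < m} := by
  obtain ⟨q, hq, hq0, hcut⟩ :=
    exists_cutCount_eq_of_lt r b (zero_lt_one.trans (one_lt_cutCount hb))
  have hq1 : cutCount r b (q + 1) = 1 := by rw [cutCount_succ, if_neg hcut, hq0]
  have hlast := cutCount_eq_pred_add_one hb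
  have hlast' := one_lt_cutCount hb
  refine ⟨q + 1, lt_of_le_of_ne hq (fun h => ?_), Set.ext fun w => ?_⟩
  · rw [show n - 1 = q by omega, hq0] at hlast
    omega
  · have hb0 : blockIndex r b b = 0 := by simp [blockIndex, cutCount_zero]
    have hwb : r w v ↔ r w b := ⟨fun h => r.trans h (r.symm hbv), fun h => r.trans h hbv⟩
    rw [Set.mem_ofPred_eq, Set.mem_ofPred_eq, hwb, rel_iff_blockIndex_eq hr hb, hb0, blockIndex]
    constructor
    · intro h
      by_contra! hle
      have := cutCount_mono r b hle
      omega
    · intro h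
      have := cutCount_mono r b (Nat.le_of_lt_succ h)
      omega

variable (r b) in
theorem card_not_rel_add_one : Nat.card {d : Fin n // ¬ r d (d + 1)} = cutCount r b n := by
  rw [Nat.card_eq_fintype_card, Fintype.card_subtype, cutCount]
  refine card_nbij' (fun d => (d - b).val) (fun i => b + i) ?_ ?_ ?_ ?_
  · intro d hd
    simpa using hd
  · intro i hi
    simp only [coe_filter, mem_range, Set.mem_ofPred_eq] at hi
    simpa using hi.2
  · intro d _
    simp
  · intro i hi
    simp only [coe_filter, mem_range, Set.mem_ofPred_eq] at hi
    simp [Fin.val_natCast, Nat.mod_eq_of_lt hi.1]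

theorem card_quotient (hr : IsGraphPartition (cycleGraph n) r) (hb : ¬ r (b - 1) b) :
    Nat.card (Quotient r) = cutCount r b n :=
  (Nat.card_congr (quotientEquivFin hr hb)).trans (Nat.card_fin _)

end CycleTubePartition

open CycleTubePartition

/-- Combinatorics of tube partitions of the cycle `C_n` (vertices `Fin n`,
cut edge `{n-1, 0}` corresponding to the edge `(n,1)`): for a tube partition
`r ≠ ⊤`, the contraction is a cycle on `|I|` vertices, every block induces a path,
there are exactly `|I|` edges between distinct blocks, and the rotation orbit of
`r` satisfies `n · |Orb(r) ∩ Π_gr(P_n)| = |I| · |Orb(r)|`. -/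
theorem stmt14 (n : ℕ) [NeZero n] (hn : 3 ≤ n) (r : Setoid (Fin n))
    (hr : IsGraphPartition (SimpleGraph.cycleGraph n) r) (hr' : r ≠ ⊤) :
    Nonempty (contractSetoid (SimpleGraph.cycleGraph n) r ≃g
        SimpleGraph.cycleGraph (Nat.card (Quotient r))) ∧
    (∀ v : Fin n, ∃ m : ℕ,
      Nonempty ((SimpleGraph.cycleGraph n).induce {w | r w v} ≃g SimpleGraph.pathGraph m)) ∧
    Nat.card {e : Sym2 (Fin n) //
        e ∈ (SimpleGraph.cycleGraph n).edgeSet ∧ ¬ ∃ a b, e = s(a, b) ∧ r a b} =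
      Nat.card (Quotient r) ∧
    n * Nat.card {s : Setoid (Fin n) // (∃ a, rotS a r = s) ∧ ¬ s (-1 : Fin n) 0} =
      Nat.card (Quotient r) * Nat.card {s : Setoid (Fin n) // ∃ a, rotS a r = s} := by
  obtain ⟨b, -, hb⟩ := Setoid.exists_rel_not_rel_sub_one hr' 0
  have hcard : Nat.card (Quotient r) = Nat.card {d : Fin n // ¬ r d (d + 1)} := by
    rw [card_quotient hr hb, card_not_rel_add_one r b]
  refine ⟨?_, fun v => ?_, ?_, ?_⟩
  · rw [card_quotient hr hb]
    exact ⟨contractSetoidIso (by omega) hr hb⟩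
  · obtain ⟨b', hb'v, hb'⟩ := Setoid.exists_rel_not_rel_sub_one hr' v
    obtain ⟨m, hm, hblock⟩ := exists_setOf_rel_eq_arc hr hb' hb'v
    exact ⟨m, ⟨hblock ▸ cycleGraphInduceArcIso b' hm⟩⟩
  · rw [hcard]
    exact (Nat.card_congr (cutEdgesEquiv r hn)).symm
  · rw [hcard]
    exact mul_card_rotS_orbit_not_rel_eq r
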